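/- LEMMA (no active incident edge): let c ∈ (0, 1/2) and suppose p satisfies the c-fixed-point condition at every edge. Then for every vertex r, the probability that no edge incident to r is active satisfies P(A_{(rs)} fails for every neighbor s of r) ≥ (1 − 2c)/(1 − c). -/

import Mathlib

open Finset

/-- `touches e v` says that vertex `v` is an endpoint of the edge `e`. -/
def touches {V : Type*} (e : V × V) (v : V) : Prop :=
  e.1 = v ∨ e.2 = v

open Classical in
/-- The greedy matching process on edges `ends 0, ends 1, …, ends (m-1)` (arriving in
this order) with activation pattern `ω`: `greedyUpTo ends ω k` is the set of (indices of)
edges matched after the first `k` edges have been processed.  An arriving edge is matched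
iff it is active and both of its endpoints are currently unmatched. -/
noncomputable def greedyUpTo {V : Type*} {m : ℕ} (ends : Fin m → V × V)
    (ω : Fin m → Bool) : ℕ → Finset (Fin m)
  | 0 => ∅
  | k + 1 =>
    if h : k < m then
      if ω ⟨k, h⟩ = true ∧
          (∀ j ∈ greedyUpTo ends ω k,
            ¬ touches (ends j) (ends ⟨k, h⟩).1 ∧ ¬ touches (ends j) (ends ⟨k, h⟩).2)
      then insert ⟨k, h⟩ (greedyUpTo ends ω k) else greedyUpTo ends ω k
    else greedyUpTo ends ω k

open Classical in
/-- Probability of the event `P` under the (finitely supported) mass function `mass`. -/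
noncomputable def prOf {Ω : Type*} [Fintype Ω] (mass : Ω → ℝ) (P : Ω → Prop) : ℝ :=
  ∑ ω, if P ω then mass ω else 0

/-- Product Bernoulli mass on activation patterns: coordinate `i` is `true` with
probability `p i`, independently across edges. -/
noncomputable def massP {m : ℕ} (p : Fin m → ℝ) (ω : Fin m → Bool) : ℝ :=
  ∏ i, if ω i then p i else 1 - p i

/-- The event `F_e`: both endpoints of edge `i` are unmatched just before `i` is
processed by the greedy process. -/
def freeAt {V : Type*} {m : ℕ} (ends : Fin m → V × V) (ω : Fin m → Bool) (i : Fin m) :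
    Prop :=
  ∀ j ∈ greedyUpTo ends ω i.1,
    ¬ touches (ends j) (ends i).1 ∧ ¬ touches (ends j) (ends i).2

/-- The event that edge `i` ends up matched by the greedy process. -/
def matchedEdge {V : Type*} {m : ℕ} (ends : Fin m → V × V) (ω : Fin m → Bool)
    (i : Fin m) : Prop :=
  i ∈ greedyUpTo ends ω m

/-- The `c`-fixed-point condition at edge `i`:
`p i * P(F_i) = c * x i`, i.e. the greedy process matches edge `i` with probability
exactly `c * x i`. -/
def fixedPt {V : Type*} {m : ℕ} (ends : Fin m → V × V) (x p : Fin m → ℝ) (c : ℝ)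
    (i : Fin m) : Prop :=
  p i * prOf (massP p) (fun ω => freeAt ends ω i) = c * x i

/-!
The event that no edge at `r` is active has probability `∏ (1 - p t)` over the edges `t` at `r`.
Such an edge `t` is free on arrival unless an earlier edge at `r`, or some edge at the other
endpoint of `t`, has been matched. By the fixed-point condition edge `j` is matched with
probability `c x_j`, so the union bound gives `P(F_t) ≥ 1 - c σ_t - c`, where `σ_t` is the
`x`-mass of the edges at `r` arriving before `t`. Then `p_t (1 - c - c σ_t) ≤ c x_t`, i.e.
`1 - p_t ≥ (1 - c - c σ_t - c x_t) / (1 - c - c σ_t)`, and these ratios telescope to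
`(1 - c - c ∑ x) / (1 - c) ≥ (1 - 2c) / (1 - c)`.
-/

theorem Finset.sub_sum_le_prod_mul {ι R : Type*} [LinearOrder ι] [CommRing R] [PartialOrder R]
    [IsOrderedRing R] (s : Finset ι) (A : R) (y q : ι → R) (hq : ∀ t ∈ s, 0 ≤ q t)
    (hstep : ∀ t ∈ s, A - ∑ k ∈ s with k < t, y k - y t ≤
      q t * (A - ∑ k ∈ s with k < t, y k)) :
    A - ∑ t ∈ s, y t ≤ (∏ t ∈ s, q t) * A := by
  induction s using Finset.induction_on_max with
  | empty => simp
  | insert a s hlt ih =>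
    have ha : a ∉ s := fun h => lt_irrefl a (hlt a h)
    have hbefore_a : ∑ k ∈ insert a s with k < a, y k = ∑ k ∈ s, y k := by
      rw [Finset.filter_insert, if_neg (lt_irrefl a), Finset.filter_true_of_mem hlt]
    have hbefore : ∀ t ∈ s, ∑ k ∈ insert a s with k < t, y k = ∑ k ∈ s with k < t, y k :=
      fun t ht => by rw [Finset.filter_insert, if_neg (lt_asymm (hlt t ht))]
    have ih' := ih (fun t ht => hq t (Finset.mem_insert_of_mem ht)) fun t ht => by
      simpa only [hbefore t ht] using hstep t (Finset.mem_insert_of_mem ht)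
    have hqa := hq a (Finset.mem_insert_self a s)
    have hstep_a := hstep a (Finset.mem_insert_self a s)
    rw [hbefore_a] at hstep_a
    rw [Finset.sum_insert ha, Finset.prod_insert ha, mul_assoc]
    calc A - (y a + ∑ t ∈ s, y t) = A - ∑ t ∈ s, y t - y a := by ring
      _ ≤ q a * (A - ∑ t ∈ s, y t) := hstep_a
      _ ≤ q a * ((∏ t ∈ s, q t) * A) := mul_le_mul_of_nonneg_left ih' hqa

section Probability

variable {m : ℕ} {p : Fin m → ℝ}

theorem prOf_congr {Ω : Type*} [Fintype Ω] (mass : Ω → ℝ) {P Q : Ω → Prop}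
    (h : ∀ ω, P ω ↔ Q ω) : prOf mass P = prOf mass Q :=
  congrArg (prOf mass) (funext fun ω => propext (h ω))

theorem prOf_le_sum {Ω ι : Type*} [Fintype Ω] {mass : Ω → ℝ} (hmass : ∀ ω, 0 ≤ mass ω)
    {P : Ω → Prop} (K : Finset ι) (E : ι → Ω → Prop) (h : ∀ ω, P ω → ∃ k ∈ K, E k ω) :
    prOf mass P ≤ ∑ k ∈ K, prOf mass (E k) := by
  classical
  unfold prOf
  rw [Finset.sum_comm]
  refine Finset.sum_le_sum fun ω _ => ?_
  have hterm : ∀ k, 0 ≤ if E k ω then mass ω else 0 := fun k => by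
    split_ifs
    exacts [hmass ω, le_rfl]
  split_ifs with hP
  · obtain ⟨k, hk, hE⟩ := h ω hP
    calc mass ω = if E k ω then mass ω else 0 := (if_pos hE).symm
      _ ≤ _ := Finset.single_le_sum (fun k _ => hterm k) hk
  · exact Finset.sum_nonneg fun k _ => hterm k

theorem massP_nonneg (hp : ∀ i, 0 ≤ p i ∧ p i ≤ 1) (ω : Fin m → Bool) : 0 ≤ massP p ω :=
  Finset.prod_nonneg fun i _ => by
    split_ifs
    exacts [(hp i).1, sub_nonneg.mpr (hp i).2]

theorem sum_massP (p : Fin m → ℝ) : ∑ ω, massP p ω = 1 := by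
  unfold massP
  rw [← Fintype.prod_sum (fun i (b : Bool) => if b then p i else 1 - p i)]
  exact Finset.prod_eq_one fun i _ => by simp

theorem prOf_not (p : Fin m → ℝ) (P : (Fin m → Bool) → Prop) :
    prOf (massP p) (fun ω => ¬ P ω) = 1 - prOf (massP p) P := by
  rw [eq_sub_iff_add_eq, prOf, prOf, ← Finset.sum_add_distrib, ← sum_massP p]
  refine Finset.sum_congr rfl fun ω _ => ?_
  by_cases hP : P ω <;> simp [hP]

theorem massP_funSplitAt_symm (p : Fin m → ℝ) (i : Fin m) (b : Bool)
    (τ : {j // j ≠ i} → Bool) :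
    massP p ((Equiv.funSplitAt i Bool).symm (b, τ)) =
      (if b then p i else 1 - p i) * ∏ j : {j // j ≠ i}, if τ j then p j else 1 - p j := by
  rw [massP, Fintype.prod_eq_mul_prod_subtype_ne _ i]
  congr 1
  · simp [Equiv.funSplitAt]
  · refine Finset.prod_congr rfl fun j _ => ?_
    simp [Equiv.funSplitAt, j.2]

theorem prOf_apply_eq_and (p : Fin m → ℝ) (i : Fin m) (b : Bool) {Q : (Fin m → Bool) → Prop}
    (hQ : ∀ ω ω', (∀ j, j ≠ i → ω j = ω' j) → (Q ω ↔ Q ω')) :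
    prOf (massP p) (fun ω => ω i = b ∧ Q ω) = (if b then p i else 1 - p i) * prOf (massP p) Q := by
  classical
  set e := Equiv.funSplitAt i Bool
  set w : Bool → ℝ := fun b' => if b' then p i else 1 - p i
  set M : ({j // j ≠ i} → Bool) → ℝ := fun τ => ∏ j : {j // j ≠ i}, if τ j then p j else 1 - p j
  have hmass : ∀ b' τ, massP p (e.symm (b', τ)) = w b' * M τ := massP_funSplitAt_symm p i
  have he : ∀ b' τ, e.symm (b', τ) i = b' := fun b' τ => by simp [e]
  have hQe : ∀ b' τ, Q (e.symm (b', τ)) ↔ Q (e.symm (b, τ)) := fun b' τ =>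
    hQ _ _ fun j hj => by simp [e, hj]
  rw [prOf, prOf, ← e.symm.sum_comp, ← e.symm.sum_comp, Fintype.sum_prod_type,
    Fintype.sum_prod_type]
  set G : ({j // j ≠ i} → Bool) → ℝ := fun τ => if Q (e.symm (b, τ)) then M τ else 0
  have hw : ∑ b', w b' = 1 := by simp [w]
  calc _ = ∑ b', ∑ τ, (if b' = b then w b' else 0) * G τ := by
        refine Finset.sum_congr rfl fun b' _ => Finset.sum_congr rfl fun τ _ => ?_
        simp only [G, hmass, he, hQe]
        split_ifs <;> simp_all
    _ = w b * ∑ τ, G τ := by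
        simp only [← Finset.mul_sum, ← Finset.sum_mul, Finset.sum_ite_eq', Finset.mem_univ,
          if_true]
    _ = w b * ∑ b', ∑ τ, w b' * G τ := by
        rw [← Finset.sum_mul_sum, hw, one_mul]
    _ = _ := by
        simp only [Finset.mul_sum]
        refine Finset.sum_congr rfl fun b' _ => Finset.sum_congr rfl fun τ _ => ?_
        simp only [G, hmass, hQe]
        by_cases hq : Q (e.symm (b, τ))
        · simp only [hq, ↓reduceIte]
          rfl
        · simp only [hq, ↓reduceIte, mul_zero]

theorem prOf_forall_mem_eq_false (p : Fin m → ℝ) (S : Finset (Fin m)) :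
    prOf (massP p) (fun ω => ∀ i ∈ S, ω i = false) = ∏ i ∈ S, (1 - p i) := by
  induction S using Finset.induction_on with
  | empty =>
    simpa [prOf] using sum_massP p
  | insert a S ha ih =>
    have hindep : ∀ ω ω' : Fin m → Bool, (∀ j, j ≠ a → ω j = ω' j) →
        ((∀ i ∈ S, ω i = false) ↔ ∀ i ∈ S, ω' i = false) := fun ω ω' h =>
      forall₂_congr fun i hi => by rw [h i (ne_of_mem_of_not_mem hi ha)]
    calc _ = prOf (massP p) (fun ω => ω a = false ∧ ∀ i ∈ S, ω i = false) :=
          prOf_congr _ fun ω => Finset.forall_mem_insert _ _ _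
      _ = (1 - p a) * ∏ i ∈ S, (1 - p i) := by rw [prOf_apply_eq_and p a false hindep, ih]; rfl
      _ = _ := by rw [Finset.prod_insert ha]

end Probability

section Greedy

variable {V : Type*} {m : ℕ} {ends : Fin m → V × V} {ω : Fin m → Bool}

theorem mem_greedyUpTo {k : ℕ} {j : Fin m} :
    j ∈ greedyUpTo ends ω k ↔ j.val < k ∧ ω j = true ∧ freeAt ends ω j := by
  induction k with
  | zero => simp [greedyUpTo]
  | succ k ih =>
    rw [greedyUpTo]
    split_ifs with hk hc
    · rw [Finset.mem_insert, ih, Fin.ext_iff]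
      constructor
      · rintro (h | h)
        · obtain rfl : j = ⟨k, hk⟩ := Fin.ext h
          exact ⟨k.lt_succ_self, hc⟩
        · exact ⟨by omega, h.2⟩
      · rintro ⟨hj, h⟩
        rcases Nat.lt_succ_iff_lt_or_eq.mp hj with hj | hj
        · exact Or.inr ⟨hj, h⟩
        · exact Or.inl hj
    · rw [ih]
      constructor
      · rintro ⟨hj, h⟩
        exact ⟨by omega, h⟩
      · rintro ⟨hj, h⟩
        refine ⟨lt_of_le_of_ne (Nat.lt_succ_iff.mp hj) fun hjk => hc ?_, h⟩
        obtain rfl : j = ⟨k, hk⟩ := Fin.ext hjk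
        exact h
    · rw [ih]
      exact and_congr_left fun _ => ⟨fun h => by omega, fun _ => by omega⟩

theorem matchedEdge_iff {j : Fin m} :
    matchedEdge ends ω j ↔ ω j = true ∧ freeAt ends ω j :=
  mem_greedyUpTo.trans (and_iff_right j.isLt)

theorem greedyUpTo_congr {ω' : Fin m → Bool} {k : ℕ} (h : ∀ i : Fin m, i.val < k → ω i = ω' i) :
    greedyUpTo ends ω k = greedyUpTo ends ω' k := by
  induction k with
  | zero => rfl
  | succ k ih =>
    have hk : greedyUpTo ends ω k = greedyUpTo ends ω' k := ih fun i hi => h i (by omega)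
    by_cases hkm : k < m
    · rw [greedyUpTo, greedyUpTo, dif_pos hkm, dif_pos hkm, hk, h ⟨k, hkm⟩ k.lt_succ_self]
    · rw [greedyUpTo, greedyUpTo, dif_neg hkm, dif_neg hkm, hk]

theorem freeAt_congr {ω' : Fin m → Bool} {t : Fin m} (h : ∀ i < t, ω i = ω' i) :
    freeAt ends ω t ↔ freeAt ends ω' t := by
  rw [freeAt, freeAt, greedyUpTo_congr fun i hi => h i hi]

theorem exists_matchedEdge_of_not_freeAt {t : Fin m} (h : ¬ freeAt ends ω t) :
    ∃ j < t, (touches (ends j) (ends t).1 ∨ touches (ends j) (ends t).2) ∧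
      matchedEdge ends ω j := by
  rw [freeAt] at h
  push Not at h
  obtain ⟨j, hj, htouch⟩ := h
  rw [mem_greedyUpTo, ← matchedEdge_iff] at hj
  exact ⟨j, hj.1, by tauto, hj.2⟩

variable {p : Fin m → ℝ}

theorem prOf_matchedEdge (j : Fin m) :
    prOf (massP p) (fun ω => matchedEdge ends ω j) =
      p j * prOf (massP p) (fun ω => freeAt ends ω j) := by
  rw [prOf_congr _ fun _ => matchedEdge_iff]
  exact prOf_apply_eq_and p j true fun ω ω' h => freeAt_congr fun i hi => h i hi.ne

theorem prOf_not_freeAt_le_sum (hp : ∀ i, 0 ≤ p i ∧ p i ≤ 1) (t : Fin m) (K : Finset (Fin m))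
    (hK : ∀ j < t, touches (ends j) (ends t).1 ∨ touches (ends j) (ends t).2 → j ∈ K) :
    prOf (massP p) (fun ω => ¬ freeAt ends ω t) ≤
      ∑ j ∈ K, prOf (massP p) (fun ω => matchedEdge ends ω j) :=
  prOf_le_sum (massP_nonneg hp) K _ fun _ hω =>
    let ⟨j, hjt, htouch, hj⟩ := exists_matchedEdge_of_not_freeAt hω
    ⟨j, hK j hjt htouch, hj⟩

theorem exists_other_endpoint {r : V} {t : Fin m} (ht : touches (ends t) r) :
    ∃ s, ∀ j, touches (ends j) (ends t).1 ∨ touches (ends j) (ends t).2 →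
      touches (ends j) r ∨ touches (ends j) s := by
  rcases ht with h | h
  · exact ⟨(ends t).2, fun j => by rw [h]; exact id⟩
  · exact ⟨(ends t).1, fun j => by rw [h]; exact Or.symm⟩

variable {x : Fin m → ℝ} {c : ℝ}

open Classical in
theorem one_sub_sum_sub_le_prOf_freeAt (hx0 : ∀ i, 0 ≤ x i)
    (hxv : ∀ v : V, ∑ i ∈ Finset.univ.filter (fun i => touches (ends i) v), x i ≤ 1)
    (hc0 : 0 ≤ c) (hp : ∀ i, 0 ≤ p i ∧ p i ≤ 1) (hfix : ∀ j : Fin m, fixedPt ends x p c j)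
    {r : V} {t : Fin m} (ht : touches (ends t) r) :
    1 - c * ∑ k ∈ Finset.univ.filter (fun i => touches (ends i) r) with k < t, x k - c ≤
      prOf (massP p) (fun ω => freeAt ends ω t) := by
  obtain ⟨s, hs⟩ := exists_other_endpoint ht
  set A := (Finset.univ.filter fun i => touches (ends i) r).filter (· < t)
  set B := Finset.univ.filter fun i => touches (ends i) s
  have hmatched : ∀ j, prOf (massP p) (fun ω => matchedEdge ends ω j) = c * x j :=
    fun j => (prOf_matchedEdge j).trans (hfix j)
  have hunion := prOf_not_freeAt_le_sum hp t (A ∪ B) fun j hjt htouch => by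
    rcases hs j htouch with h | h <;> simp [A, B, h, hjt]
  have hsplit : ∑ j ∈ A ∪ B, c * x j ≤ c * ∑ j ∈ A, x j + c * 1 := by
    rw [← Finset.mul_sum, ← mul_add]
    refine mul_le_mul_of_nonneg_left ?_ hc0
    have hinter : 0 ≤ ∑ j ∈ A ∩ B, x j := Finset.sum_nonneg fun j _ => hx0 j
    linarith [Finset.sum_union_inter (s₁ := A) (s₂ := B) (f := x), hxv s]
  simp only [hmatched, prOf_not] at hunion
  linarith

end Greedy

open Classical in
theorem no_active_incident_edge_general {V : Type*} {m : ℕ}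
    (ends : Fin m → V × V)
    (x : Fin m → ℝ)
    (hx0 : ∀ i, 0 ≤ x i)
    (hxv : ∀ v : V,
      ∑ i ∈ Finset.univ.filter (fun i => touches (ends i) v), x i ≤ 1)
    (c : ℝ) (hc0 : 0 < c) (hc2 : c < 1 / 2)
    (p : Fin m → ℝ) (hp : ∀ i, 0 ≤ p i ∧ p i ≤ 1)
    (hfix : ∀ j : Fin m, fixedPt ends x p c j)
    (r : V) :
    prOf (massP p) (fun ω => ∀ i : Fin m, touches (ends i) r → ω i = false)
      ≥ (1 - 2 * c) / (1 - c) := by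
  set R := Finset.univ.filter fun i => touches (ends i) r
  have hR : prOf (massP p) (fun ω => ∀ i : Fin m, touches (ends i) r → ω i = false) =
      ∏ i ∈ R, (1 - p i) := by
    rw [← prOf_forall_mem_eq_false]
    exact prOf_congr _ fun ω => by simp [R]
  have hstep : ∀ t ∈ R, (1 - c) - ∑ k ∈ R with k < t, c * x k - c * x t ≤
      (1 - p t) * ((1 - c) - ∑ k ∈ R with k < t, c * x k) := by
    intro t ht
    have hfree := one_sub_sum_sub_le_prOf_freeAt hx0 hxv hc0.le hp hfix (Finset.mem_filter.mp ht).2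
    have hfix_t : p t * prOf (massP p) (fun ω => freeAt ends ω t) = c * x t := hfix t
    rw [← Finset.mul_sum]
    linarith [mul_le_mul_of_nonneg_left hfree (hp t).1]
  have hprod := Finset.sub_sum_le_prod_mul R (1 - c) (fun i => c * x i) (fun i => 1 - p i)
    (fun t _ => sub_nonneg.mpr (hp t).2) hstep
  have hsum : ∑ i ∈ R, c * x i ≤ c := by
    rw [← Finset.mul_sum]
    exact mul_le_of_le_one_right hc0.le (hxv r)
  rw [ge_iff_le, hR, div_le_iff₀ (by linarith)]
  linarith

open Classical in
/-- No-active-incident-edge lemma (Lemma 5.4 in the paper): let `c ∈ (0, 1/2)` and suppose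
the activation probabilities `p : E → [0,1]` satisfy the `c`-fixed-point condition at every
edge.  Then for every vertex `r`, the probability that no edge incident to `r` is active
is at least `(1 - 2c)/(1 - c)`. -/
theorem no_active_incident_edge {V : Type*} {m : ℕ}
    (ends : Fin m → V × V)
    (hsimple : ∀ i, (ends i).1 ≠ (ends i).2)
    (hdist : ∀ i j : Fin m, i ≠ j →
      ¬(((ends i).1 = (ends j).1 ∧ (ends i).2 = (ends j).2) ∨
        ((ends i).1 = (ends j).2 ∧ (ends i).2 = (ends j).1)))
    (x : Fin m → ℝ)
    (hx0 : ∀ i, 0 ≤ x i)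
    (hxv : ∀ v : V,
      ∑ i ∈ Finset.univ.filter (fun i => touches (ends i) v), x i ≤ 1)
    (c : ℝ) (hc0 : 0 < c) (hc2 : c < 1 / 2)
    (p : Fin m → ℝ) (hp : ∀ i, 0 ≤ p i ∧ p i ≤ 1)
    (hfix : ∀ j : Fin m, fixedPt ends x p c j)
    (r : V) :
    prOf (massP p) (fun ω => ∀ i : Fin m, touches (ends i) r → ω i = false)
      ≥ (1 - 2 * c) / (1 - c) :=
  no_active_incident_edge_general ends x hx0 hxv c hc0 hc2 p hp hfix r
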